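/- arXiv:1607.06747 — 11 statements merged into one kernel-verified Lean document; each statement's English description precedes it below -/
import Mathlib

section
/- Let A be a bounded operator on a complex Hilbert space H that is quasi *-paranormal, i.e., ‖A*Ax‖² ≤ ‖A³x‖·‖Ax‖ for all x ∈ H. Then for every integer n ≥ 1, ‖Aⁿ‖ = ‖A‖ⁿ (i.e., A is normaloid). -/
/-!
Since `‖A x‖² = re ⟪A* A x, x⟫ ≤ ‖A* A x‖ ‖x‖`, quasi *-paranormality gives
`‖A x‖⁴ ≤ ‖A³ x‖ ‖A x‖ ‖x‖²`, i.e. `A` is 3-paranormal: `‖A x‖³ ≤ ‖A³ x‖ ‖x‖²`.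

A `k`-paranormal operator `T` is normaloid. Applying the defining inequality at `Tʲ x` gives
`‖T^(j+1)‖^k ≤ ‖T^(j+k)‖ ‖Tʲ‖^(k-1)`, so `‖T^(j+1)‖ = ‖T‖^(j+1)` forces
`‖T^(j+k)‖ = ‖T‖^(j+k)`. Starting from `j = 0` this yields `‖Tⁿ‖ = ‖T‖ⁿ` for arbitrarily
large `n`, and in any normed ring that identity descends to every smaller positive exponent by
submultiplicativity.
-/

open Filter

section SeminormedRing

variable {R : Type*} [SeminormedRing R]

theorem norm_pow_eq_pow_norm_of_le {a : R} {m n : ℕ} (hm : 0 < m) (hmn : m ≤ n)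
    (h : ‖a ^ n‖ = ‖a‖ ^ n) : ‖a ^ m‖ = ‖a‖ ^ m := by
  refine le_antisymm (norm_pow_le' a hm) ?_
  obtain ⟨d, rfl⟩ := Nat.exists_eq_add_of_le hmn
  rcases d.eq_zero_or_pos with rfl | hd
  · exact h.ge
  rcases (norm_nonneg a).eq_or_lt with ha | ha
  · rw [← ha, zero_pow hm.ne']
    exact norm_nonneg _
  have key : ‖a‖ ^ m * ‖a‖ ^ d ≤ ‖a ^ m‖ * ‖a‖ ^ d :=
    calc ‖a‖ ^ m * ‖a‖ ^ d = ‖a ^ m * a ^ d‖ := by rw [← pow_add, ← h, pow_add]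
      _ ≤ ‖a ^ m‖ * ‖a ^ d‖ := norm_mul_le _ _
      _ ≤ ‖a ^ m‖ * ‖a‖ ^ d := by gcongr; exact norm_pow_le' a hd
  exact le_of_mul_le_mul_right key (pow_pos ha d)

theorem norm_pow_eq_pow_norm_of_frequently {a : R}
    (h : ∃ᶠ n in atTop, ‖a ^ n‖ = ‖a‖ ^ n) {m : ℕ} (hm : 0 < m) : ‖a ^ m‖ = ‖a‖ ^ m := by
  obtain ⟨n, hmn, hn⟩ := frequently_atTop.1 h m
  exact norm_pow_eq_pow_norm_of_le hm hmn hn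

end SeminormedRing

namespace ContinuousLinearMap

section Normed

variable {𝕜 E F : Type*} [NontriviallyNormedField 𝕜] [SeminormedAddCommGroup E]
  [NormedSpace 𝕜 E] [SeminormedAddCommGroup F] [NormedSpace 𝕜 F]

theorem opNorm_pow_le_of_forall_norm_apply_pow_le (T : E →L[𝕜] F) {C : ℝ} {k : ℕ}
    (hk : k ≠ 0) (hC : 0 ≤ C) (h : ∀ x, ‖T x‖ ^ k ≤ C * ‖x‖ ^ k) : ‖T‖ ^ k ≤ C := by
  have hroot : (C ^ (k⁻¹ : ℝ)) ^ k = C := Real.rpow_inv_natCast_pow hC hk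
  calc ‖T‖ ^ k ≤ (C ^ (k⁻¹ : ℝ)) ^ k := by
        gcongr
        refine T.opNorm_le_bound (by positivity) fun x => ?_
        rw [← pow_le_pow_iff_left₀ (norm_nonneg _) (by positivity) hk, mul_pow, hroot]
        exact h x
    _ = C := hroot

theorem norm_pow_le_pow_norm (T : E →L[𝕜] E) (n : ℕ) : ‖T ^ n‖ ≤ ‖T‖ ^ n := by
  rcases n.eq_zero_or_pos with rfl | hn
  · rw [pow_zero, pow_zero]
    exact norm_id_le
  · exact norm_pow_le' T hn

def IsKParanormal (k : ℕ) (T : E →L[𝕜] E) : Prop :=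
  ∀ x, ‖T x‖ ^ k ≤ ‖(T ^ k) x‖ * ‖x‖ ^ (k - 1)

namespace IsKParanormal

variable {k : ℕ} {T : E →L[𝕜] E}

theorem opNorm_pow_succ_pow_le (hT : IsKParanormal k T) (hk : k ≠ 0) (j : ℕ) :
    ‖T ^ (j + 1)‖ ^ k ≤ ‖T ^ (j + k)‖ * ‖T ^ j‖ ^ (k - 1) := by
  refine opNorm_pow_le_of_forall_norm_apply_pow_le _ hk (by positivity) fun x => ?_
  have hx : ‖x‖ ^ k = ‖x‖ * ‖x‖ ^ (k - 1) := by
    rw [← pow_succ', Nat.sub_add_cancel (Nat.one_le_iff_ne_zero.2 hk)]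
  calc ‖(T ^ (j + 1)) x‖ ^ k = ‖T ((T ^ j) x)‖ ^ k := by
        rw [pow_succ', mul_apply_eq_comp]
    _ ≤ ‖(T ^ k) ((T ^ j) x)‖ * ‖(T ^ j) x‖ ^ (k - 1) := hT _
    _ ≤ (‖T ^ (j + k)‖ * ‖x‖) * (‖T ^ j‖ * ‖x‖) ^ (k - 1) := by
        rw [← mul_apply_eq_comp, ← pow_add, add_comm k j]
        gcongr <;> exact le_opNorm _ _
    _ = ‖T ^ (j + k)‖ * ‖T ^ j‖ ^ (k - 1) * ‖x‖ ^ k := by rw [hx]; ring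

theorem norm_pow_add_eq (hT : IsKParanormal k T) (hk : k ≠ 0) {j : ℕ}
    (hj : ‖T ^ (j + 1)‖ = ‖T‖ ^ (j + 1)) : ‖T ^ (j + k)‖ = ‖T‖ ^ (j + k) := by
  refine le_antisymm (T.norm_pow_le_pow_norm _) ?_
  rcases (norm_nonneg T).eq_or_lt with hT0 | hT0
  · rw [← hT0, zero_pow (by omega)]
    exact norm_nonneg _
  have hexp : j + k + j * (k - 1) = (j + 1) * k := by
    obtain ⟨k, rfl⟩ := Nat.exists_eq_add_one_of_ne_zero hk
    simp only [Nat.add_sub_cancel]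
    ring
  have key : ‖T‖ ^ (j + k) * (‖T‖ ^ j) ^ (k - 1) ≤ ‖T ^ (j + k)‖ * (‖T‖ ^ j) ^ (k - 1) :=
    calc ‖T‖ ^ (j + k) * (‖T‖ ^ j) ^ (k - 1) = ‖T ^ (j + 1)‖ ^ k := by
          rw [hj, ← pow_mul, ← pow_mul, ← pow_add, hexp]
      _ ≤ ‖T ^ (j + k)‖ * ‖T ^ j‖ ^ (k - 1) := hT.opNorm_pow_succ_pow_le hk j
      _ ≤ ‖T ^ (j + k)‖ * (‖T‖ ^ j) ^ (k - 1) := by gcongr; exact T.norm_pow_le_pow_norm j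
  exact le_of_mul_le_mul_right key (by positivity)

theorem norm_pow_eq (hT : IsKParanormal k T) (hk : 2 ≤ k) {n : ℕ} (hn : 0 < n) :
    ‖T ^ n‖ = ‖T‖ ^ n := by
  have hprog : ∀ m, ‖T ^ (m * (k - 1) + 1)‖ = ‖T‖ ^ (m * (k - 1) + 1) := by
    intro m
    induction m with
    | zero => simp
    | succ m ih =>
      have hexp : (m + 1) * (k - 1) + 1 = m * (k - 1) + k := by rw [add_one_mul]; omega
      rw [hexp]
      exact hT.norm_pow_add_eq (by omega) ih
  refine norm_pow_eq_pow_norm_of_frequently (frequently_atTop.2 fun N => ?_) hn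
  exact ⟨N * (k - 1) + 1, Nat.le_add_right_of_le (Nat.le_mul_of_pos_right N (by omega)), hprog N⟩

end IsKParanormal

end Normed

section InnerProduct

variable {𝕜 H : Type*} [RCLike 𝕜] [NormedAddCommGroup H] [InnerProductSpace 𝕜 H]
  [CompleteSpace H]

def IsQuasiStarParanormal (T : H →L[𝕜] H) : Prop :=
  ∀ x, ‖adjoint T (T x)‖ ^ 2 ≤ ‖(T ^ 3) x‖ * ‖T x‖

theorem norm_apply_sq_le_norm_adjoint_apply_mul (T : H →L[𝕜] H) (x : H) :
    ‖T x‖ ^ 2 ≤ ‖adjoint T (T x)‖ * ‖x‖ :=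
  calc ‖T x‖ ^ 2 = RCLike.re (inner 𝕜 (adjoint T (T x)) x) :=
        apply_norm_sq_eq_inner_adjoint_left T x
    _ ≤ ‖inner 𝕜 (adjoint T (T x)) x‖ := RCLike.re_le_norm _
    _ ≤ ‖adjoint T (T x)‖ * ‖x‖ := norm_inner_le_norm _ _

theorem IsQuasiStarParanormal.isKParanormal_three {T : H →L[𝕜] H}
    (hT : IsQuasiStarParanormal T) : IsKParanormal 3 T := by
  intro x
  show ‖T x‖ ^ 3 ≤ ‖(T ^ 3) x‖ * ‖x‖ ^ 2
  rcases (norm_nonneg (T x)).eq_or_lt with h0 | h0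
  · rw [← h0, zero_pow three_ne_zero]
    positivity
  have key : ‖T x‖ ^ 3 * ‖T x‖ ≤ ‖(T ^ 3) x‖ * ‖x‖ ^ 2 * ‖T x‖ :=
    calc ‖T x‖ ^ 3 * ‖T x‖ = (‖T x‖ ^ 2) ^ 2 := by ring
      _ ≤ (‖adjoint T (T x)‖ * ‖x‖) ^ 2 := by
          gcongr
          exact norm_apply_sq_le_norm_adjoint_apply_mul T x
      _ = ‖adjoint T (T x)‖ ^ 2 * ‖x‖ ^ 2 := mul_pow _ _ _
      _ ≤ ‖(T ^ 3) x‖ * ‖T x‖ * ‖x‖ ^ 2 := by gcongr; exact hT x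
      _ = ‖(T ^ 3) x‖ * ‖x‖ ^ 2 * ‖T x‖ := by ring
  exact le_of_mul_le_mul_right key h0

end InnerProduct

end ContinuousLinearMap

theorem quasi_star_paranormal_normaloid
    {H : Type*} [NormedAddCommGroup H] [InnerProductSpace ℂ H] [CompleteSpace H]
    (A : H →L[ℂ] H)
    (hqsp : ∀ x : H, ‖(ContinuousLinearMap.adjoint A) (A x)‖ ^ 2 ≤ ‖(A ^ 3) x‖ * ‖A x‖) :
    ∀ n : ℕ, 1 ≤ n → ‖A ^ n‖ = ‖A‖ ^ n := fun _ hn =>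
  (ContinuousLinearMap.IsQuasiStarParanormal.isKParanormal_three (T := A) hqsp).norm_pow_eq
    (by norm_num) hn
end

section
/- Let A be a bounded operator on a complex Hilbert space H that is *-paranormal, i.e., ‖A*x‖² ≤ ‖A²x‖·‖x‖ for all x. If A is quasinilpotent, then A = 0. -/
/-!
A *-paranormal operator is normaloid, `‖A‖ ^ n = ‖A ^ n‖`. Cauchy–Schwarz followed by
*-paranormality at `A y` gives `‖A y‖ ^ 3 ≤ ‖A ^ 3 y‖ * ‖y‖ ^ 2`, hence
`‖A ^ (n + 1)‖ ^ 3 ≤ ‖A ^ (n + 3)‖ * ‖A ^ n‖ ^ 2`, and together with `‖A‖ ^ 2 ≤ ‖A ^ 2‖`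
(from `‖A†‖ = ‖A‖`) a two-step induction yields `‖A‖ ^ n ≤ ‖A ^ n‖`. By Gelfand's formula the
norm of a normaloid operator is its spectral radius, which vanishes for a quasinilpotent one.
-/

open ContinuousLinearMap Filter

namespace ContinuousLinearMap

variable {𝕜 E F : Type*} [NontriviallyNormedField 𝕜] [SeminormedAddCommGroup E]
  [SeminormedAddCommGroup F] [NormedSpace 𝕜 E] [NormedSpace 𝕜 F]

theorem opNorm_pow_le_of_pow_le {k : ℕ} (hk : k ≠ 0) {C : ℝ} (hC : 0 ≤ C) (f : E →L[𝕜] F)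
    (h : ∀ x, ‖f x‖ ^ k ≤ C * ‖x‖ ^ k) : ‖f‖ ^ k ≤ C := by
  have hroot : ‖f‖ ≤ C ^ (k⁻¹ : ℝ) := by
    refine opNorm_le_bound f (by positivity) fun x => ?_
    refine (pow_le_pow_iff_left₀ (norm_nonneg _) (by positivity) hk).mp ?_
    rw [mul_pow, Real.rpow_inv_natCast_pow hC hk]
    exact h x
  calc ‖f‖ ^ k ≤ (C ^ (k⁻¹ : ℝ)) ^ k := by gcongr
    _ = C := Real.rpow_inv_natCast_pow hC hk

end ContinuousLinearMap

theorem ofReal_norm_le_spectralRadius_of_pow_norm_le {A : Type*} [NormedRing A]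
    [NormedAlgebra ℂ A] [CompleteSpace A] (a : A) (h : ∀ n : ℕ, ‖a‖ ^ (n + 1) ≤ ‖a ^ (n + 1)‖) :
    ENNReal.ofReal ‖a‖ ≤ spectralRadius ℂ a := by
  refine ge_of_tendsto (spectrum.pow_norm_pow_one_div_tendsto_nhds_spectralRadius a) ?_
  filter_upwards [eventually_ge_atTop 1] with n hn
  obtain ⟨m, rfl⟩ := Nat.exists_eq_add_of_le' hn
  refine ENNReal.ofReal_le_ofReal ?_
  calc ‖a‖ = (‖a‖ ^ (m + 1)) ^ ((m + 1 : ℕ)⁻¹ : ℝ) :=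
        (Real.pow_rpow_inv_natCast (norm_nonneg a) m.succ_ne_zero).symm
    _ ≤ ‖a ^ (m + 1)‖ ^ (1 / (m + 1 : ℕ) : ℝ) := by
        rw [one_div]
        exact Real.rpow_le_rpow (by positivity) (h m) (by positivity)

section StarParanormal

variable {𝕜 H : Type*} [RCLike 𝕜] [NormedAddCommGroup H] [InnerProductSpace 𝕜 H]
  [CompleteSpace H]

def IsStarParanormal (A : H →L[𝕜] H) : Prop :=
  ∀ x : H, ‖adjoint A x‖ ^ 2 ≤ ‖(A ^ 2) x‖ * ‖x‖

namespace IsStarParanormal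

variable {A : H →L[𝕜] H}

theorem norm_apply_cube_le (hA : IsStarParanormal A) (y : H) :
    ‖A y‖ ^ 3 ≤ ‖(A ^ 3) y‖ * ‖y‖ ^ 2 := by
  have cauchy_schwarz : ‖A y‖ ^ 2 ≤ ‖adjoint A (A y)‖ * ‖y‖ := by
    rw [← inner_self_eq_norm_sq (𝕜 := 𝕜), ← adjoint_inner_left]
    exact (RCLike.re_le_norm _).trans (norm_inner_le_norm _ _)
  have paranormal : ‖adjoint A (A y)‖ ^ 2 ≤ ‖(A ^ 3) y‖ * ‖A y‖ := by
    rw [pow_succ A 2]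
    exact hA (A y)
  rcases (norm_nonneg (A y)).eq_or_lt with h0 | hpos
  · rw [← h0, zero_pow three_ne_zero]
    positivity
  refine le_of_mul_le_mul_right ?_ hpos
  calc ‖A y‖ ^ 3 * ‖A y‖ = (‖A y‖ ^ 2) ^ 2 := by ring
    _ ≤ (‖adjoint A (A y)‖ * ‖y‖) ^ 2 := by gcongr
    _ = ‖adjoint A (A y)‖ ^ 2 * ‖y‖ ^ 2 := by ring
    _ ≤ ‖(A ^ 3) y‖ * ‖A y‖ * ‖y‖ ^ 2 := by gcongr
    _ = ‖(A ^ 3) y‖ * ‖y‖ ^ 2 * ‖A y‖ := by ring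

theorem norm_pow_succ_cube_le (hA : IsStarParanormal A) (n : ℕ) :
    ‖A ^ (n + 1)‖ ^ 3 ≤ ‖A ^ (n + 3)‖ * ‖A ^ n‖ ^ 2 := by
  refine opNorm_pow_le_of_pow_le three_ne_zero (by positivity) _ fun x => ?_
  calc ‖(A ^ (n + 1)) x‖ ^ 3 = ‖A ((A ^ n) x)‖ ^ 3 := by rw [pow_succ' A n]; rfl
    _ ≤ ‖(A ^ 3) ((A ^ n) x)‖ * ‖(A ^ n) x‖ ^ 2 := hA.norm_apply_cube_le _
    _ = ‖(A ^ (n + 3)) x‖ * ‖(A ^ n) x‖ ^ 2 := by rw [add_comm n 3, pow_add]; rfl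
    _ ≤ ‖A ^ (n + 3)‖ * ‖x‖ * (‖A ^ n‖ * ‖x‖) ^ 2 := by gcongr <;> exact le_opNorm _ _
    _ = ‖A ^ (n + 3)‖ * ‖A ^ n‖ ^ 2 * ‖x‖ ^ 3 := by ring

theorem norm_sq_le_norm_pow_two (hA : IsStarParanormal A) : ‖A‖ ^ 2 ≤ ‖A ^ 2‖ := by
  rw [← adjoint.norm_map A]
  refine opNorm_pow_le_of_pow_le two_ne_zero (norm_nonneg _) _ fun x => ?_
  calc ‖adjoint A x‖ ^ 2 ≤ ‖(A ^ 2) x‖ * ‖x‖ := hA x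
    _ ≤ ‖A ^ 2‖ * ‖x‖ * ‖x‖ := by gcongr; exact le_opNorm _ _
    _ = ‖A ^ 2‖ * ‖x‖ ^ 2 := by ring

theorem pow_norm_le_norm_pow (hA : IsStarParanormal A) (n : ℕ) :
    ‖A‖ ^ (n + 1) ≤ ‖A ^ (n + 1)‖ := by
  induction n using Nat.twoStepInduction with
  | zero => simp
  | one => exact hA.norm_sq_le_norm_pow_two
  | more k ih _ =>
    rcases (norm_nonneg A).eq_or_lt with h0 | hpos
    · rw [← h0, zero_pow (k + 2).succ_ne_zero]
      positivity
    have norm_pow_le : ‖A ^ k‖ ≤ ‖A‖ ^ k := by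
      rcases k.eq_zero_or_pos with rfl | hk
      · exact norm_id_le
      · exact norm_pow_le' A hk
    refine le_of_mul_le_mul_right ?_ (pow_pos hpos (2 * k))
    calc ‖A‖ ^ (k + 3) * ‖A‖ ^ (2 * k) = (‖A‖ ^ (k + 1)) ^ 3 := by ring
      _ ≤ ‖A ^ (k + 1)‖ ^ 3 := by gcongr
      _ ≤ ‖A ^ (k + 3)‖ * ‖A ^ k‖ ^ 2 := hA.norm_pow_succ_cube_le k
      _ ≤ ‖A ^ (k + 3)‖ * (‖A‖ ^ k) ^ 2 := by gcongr
      _ = ‖A ^ (k + 3)‖ * ‖A‖ ^ (2 * k) := by ring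

end IsStarParanormal

end StarParanormal

theorem star_paranormal_quasinilpotent_eq_zero
    {H : Type*} [NormedAddCommGroup H] [InnerProductSpace ℂ H] [CompleteSpace H]
    (A : H →L[ℂ] H)
    (hsp : ∀ x : H, ‖(ContinuousLinearMap.adjoint A) x‖ ^ 2 ≤ ‖(A ^ 2) x‖ * ‖x‖)
    (hquasi : spectralRadius ℂ A = 0) :
    A = 0 := by
  have hA : IsStarParanormal A := hsp
  have hnorm := ofReal_norm_le_spectralRadius_of_pow_norm_le A hA.pow_norm_le_norm_pow
  rw [hquasi, nonpos_iff_eq_zero, ENNReal.ofReal_eq_zero] at hnorm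
  exact norm_le_zero_iff.mp hnorm
end

section
/- A bounded operator T on a complex Hilbert space is quasi *-paranormal (‖T*Tx‖² ≤ ‖T³x‖·‖Tx‖ for all x) if and only if for every real λ > 0 the operator T*[(T*)²T² − 2λTT* + λ²I]T is positive. -/
/-!
Moving the outer `T*` across the inner product, the quadratic form of
`T*[(T*)²T² − 2λTT* + λ²]T` at `x` is `‖T³x‖² − 2λ‖T*Tx‖² + λ²‖Tx‖²`. A real quadratic
`a² − 2λc + λ²b²` with `a, b ≥ 0` is nonnegative for all `λ > 0` exactly when `c ≤ ab`:
one direction is `(a − λb)² ≥ 0`, the other is the discriminant condition.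
-/

open ContinuousLinearMap

lemma forall_pos_quadratic_nonneg_iff {a b c : ℝ} (ha : 0 ≤ a) (hb : 0 ≤ b) :
    (∀ t : ℝ, 0 < t → 0 ≤ a ^ 2 - 2 * t * c + t ^ 2 * b ^ 2) ↔ c ≤ a * b := by
  refine ⟨fun h => ?_, fun hc t ht => ?_⟩
  · rcases le_or_gt c 0 with hc | hc
    · exact hc.trans (mul_nonneg ha hb)
    -- for `c > 0` the quadratic is nonnegative on all of `ℝ`, so its discriminant is `≤ 0`
    have hall : ∀ t : ℝ, 0 ≤ b ^ 2 * (t * t) + (-2 * c) * t + a ^ 2 := by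
      intro t
      rcases le_or_gt t 0 with ht | ht
      · nlinarith
      · linarith [h t ht]
    have hdisc := discrim_le_zero hall
    rw [discrim] at hdisc
    nlinarith [mul_nonneg ha hb]
  · calc 0 ≤ (a - t * b) ^ 2 := sq_nonneg _
      _ ≤ a ^ 2 - 2 * t * c + t ^ 2 * b ^ 2 := by nlinarith

section

variable {H : Type*} [NormedAddCommGroup H] [InnerProductSpace ℂ H] [CompleteSpace H]

lemma re_inner_quadratic_apply_self (T : H →L[ℂ] H) (lam : ℝ) (y : H) :
    (@inner ℂ _ _ ((adjoint T ^ 2 * T ^ 2 - (2 * (lam : ℂ)) • (T * adjoint T)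
        + ((lam : ℂ) ^ 2) • (1 : H →L[ℂ] H)) y) y).re
      = ‖(T ^ 2) y‖ ^ 2 - 2 * lam * ‖adjoint T y‖ ^ 2 + lam ^ 2 * ‖y‖ ^ 2 := by
  have h₁ : @inner ℂ _ _ ((adjoint T ^ 2 * T ^ 2) y) y
      = @inner ℂ _ _ ((T ^ 2) y) ((T ^ 2) y) := by
    simp only [sq, mul_apply_eq_comp, adjoint_inner_left]
  have h₂ : @inner ℂ _ _ ((T * adjoint T) y) y = @inner ℂ _ _ (adjoint T y) (adjoint T y) := by
    rw [mul_apply_eq_comp, ← adjoint_inner_right]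
  simp only [add_apply, sub_apply, smul_apply, one_apply_eq_self, inner_add_left, inner_sub_left,
    inner_smul_left, h₁, h₂, inner_self_eq_norm_sq_to_K]
  simp [← Complex.ofReal_pow]

lemma re_inner_adjoint_mul_quadratic_mul_apply_self (T : H →L[ℂ] H) (lam : ℝ) (x : H) :
    (@inner ℂ _ _ ((adjoint T * (adjoint T ^ 2 * T ^ 2 - (2 * (lam : ℂ)) • (T * adjoint T)
        + ((lam : ℂ) ^ 2) • (1 : H →L[ℂ] H)) * T) x) x).re
      = ‖(T ^ 3) x‖ ^ 2 - 2 * lam * ‖adjoint T (T x)‖ ^ 2 + lam ^ 2 * ‖T x‖ ^ 2 := by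
  rw [mul_apply_eq_comp, mul_apply_eq_comp, adjoint_inner_left, re_inner_quadratic_apply_self,
    ← mul_apply_eq_comp, ← pow_succ]

end

theorem quasi_star_paranormal_iff_positive
    {H : Type*} [NormedAddCommGroup H] [InnerProductSpace ℂ H] [CompleteSpace H]
    (T : H →L[ℂ] H) :
    (∀ x : H, ‖(ContinuousLinearMap.adjoint T) (T x)‖ ^ 2 ≤ ‖(T ^ 3) x‖ * ‖T x‖) ↔
      (∀ lam : ℝ, 0 < lam → ∀ x : H,
        0 ≤ (@inner ℂ _ _
          (((ContinuousLinearMap.adjoint T) *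
            ((ContinuousLinearMap.adjoint T) ^ 2 * T ^ 2
              - (2 * (lam : ℂ)) • (T * ContinuousLinearMap.adjoint T)
              + ((lam : ℂ) ^ 2) • (1 : H →L[ℂ] H)) * T) x) x).re) := by
  have hquad (x : H) := forall_pos_quadratic_nonneg_iff (c := ‖adjoint T (T x)‖ ^ 2)
    (norm_nonneg ((T ^ 3) x)) (norm_nonneg (T x))
  simp only [re_inner_adjoint_mul_quadratic_mul_apply_self]
  exact ⟨fun h lam hlam x => (hquad x).2 (h x) lam hlam,
    fun h x => (hquad x).1 fun lam hlam => h lam hlam x⟩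
end

section
/- Let A, B, C be bounded operators on a complex Hilbert space H. Then A*A − 2λB*B + λ²C*C ≥ 0 for all real λ > 0 if and only if ‖Bx‖² ≤ ‖Ax‖·‖Cx‖ for all x ∈ H. -/
/-!
Since `⟪A† A x, x⟫ = ‖A x‖²`, the form is the real quadratic `P - 2λQ + λ²R` in `λ` with
`P = ‖A x‖²`, `Q = ‖B x‖²`, `R = ‖C x‖²`, and such a quadratic with nonnegative coefficients is
nonnegative on `λ > 0` exactly when `Q² ≤ P R`.
-/

open ContinuousLinearMap

lemma forall_pos_quadratic_nonneg_iff_s5 {P Q R : ℝ} (hP : 0 ≤ P) (hQ : 0 ≤ Q) (hR : 0 ≤ R) :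
    (∀ t : ℝ, 0 < t → 0 ≤ P - 2 * t * Q + t ^ 2 * R) ↔ Q ^ 2 ≤ P * R := by
  constructor
  · intro h
    rcases hQ.eq_or_lt with rfl | hQpos
    · simpa using mul_nonneg hP hR
    -- If `Q² > P R`, this `t` lies strictly between `P / Q` and `Q / R`,
    -- where `P - 2tQ + t²R = (P - tQ) + t (tR - Q) < 0`.
    have ht : 0 < (P + Q) / (Q + R) := div_pos (by linarith) (by linarith)
    have key : (Q + R) ^ 2 * (P - 2 * ((P + Q) / (Q + R)) * Q + ((P + Q) / (Q + R)) ^ 2 * R)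
        = (P * R - Q ^ 2) * (P + 2 * Q + R) := by
      field_simp
      ring
    have hval := mul_nonneg (sq_nonneg (Q + R)) (h _ ht)
    rw [key] at hval
    exact sub_nonneg.mp (nonneg_of_mul_nonneg_left hval (by positivity))
  · intro h t _
    have hsq : (2 * t * Q) ^ 2 ≤ (P + t ^ 2 * R) ^ 2 := by
      nlinarith [sq_nonneg (P - t ^ 2 * R), sq_nonneg t]
    linarith [le_abs_self (2 * t * Q), abs_le_of_sq_le_sq hsq (by positivity)]

section

variable {H : Type*} [NormedAddCommGroup H] [InnerProductSpace ℂ H] [CompleteSpace H]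

lemma re_inner_adjoint_mul_self_apply (T : H →L[ℂ] H) (x : H) :
    (inner ℂ ((adjoint T * T) x) x).re = ‖T x‖ ^ 2 :=
  (apply_norm_sq_eq_inner_adjoint_left T x).symm

lemma re_inner_adjoint_pencil_apply (A B C : H →L[ℂ] H) (t : ℝ) (x : H) :
    (inner ℂ ((adjoint A * A - (2 * (t : ℂ)) • (adjoint B * B)
        + ((t : ℂ) ^ 2) • (adjoint C * C)) x) x).re
      = ‖A x‖ ^ 2 - 2 * t * ‖B x‖ ^ 2 + t ^ 2 * ‖C x‖ ^ 2 := by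
  simp only [add_apply, sub_apply, smul_apply, inner_add_left, inner_sub_left, inner_smul_left,
    Complex.add_re, Complex.sub_re, ← Complex.ofReal_ofNat, ← Complex.ofReal_pow,
    ← Complex.ofReal_mul, Complex.conj_ofReal, Complex.re_ofReal_mul,
    re_inner_adjoint_mul_self_apply]

end

theorem positivity_iff_norm_ineq
    {H : Type*} [NormedAddCommGroup H] [InnerProductSpace ℂ H] [CompleteSpace H]
    (A B C : H →L[ℂ] H) :
    (∀ lam : ℝ, 0 < lam → ∀ x : H,
        0 ≤ (@inner ℂ _ _
          ((ContinuousLinearMap.adjoint A * A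
            - (2 * (lam : ℂ)) • (ContinuousLinearMap.adjoint B * B)
            + ((lam : ℂ) ^ 2) • (ContinuousLinearMap.adjoint C * C)) x) x).re) ↔
      (∀ x : H, ‖B x‖ ^ 2 ≤ ‖A x‖ * ‖C x‖) := by
  simp only [re_inner_adjoint_pencil_apply, imp_forall_iff]
  rw [forall_comm]
  refine forall_congr' fun x => ?_
  rw [forall_pos_quadratic_nonneg_iff_s5 (by positivity) (by positivity) (by positivity), ← mul_pow,
    pow_le_pow_iff_left₀ (by positivity) (by positivity) two_ne_zero]
end

section
/- Let A be quasinormal (A commutes with A*A) and B be normal, with AB = λBA ≠ 0 for λ ∈ ℂ with |λ| = 1. Then AB is quasinormal, i.e., (AB)((AB)*(AB)) = ((AB)*(AB))(AB). -/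
/-!
With C = λB, the hypothesis says that A intertwines B and C: AB = CA. Both B and C are normal,
so by Fuglede–Putnam A also intertwines B* and C*: AB* = C*A. Taking adjoints gives A*C = BA*,
hence A*A·B = A*CA = BA*A. Composing the two intertwinings gives A·B*B = C*C·A, and |λ| = 1 makes
C*C = B*B. So (AB)*(AB) = B*A*AB = B*B·A*A is a product of two operators commuting with both A
and B, hence with AB.
-/

def IsQuasinormal {R : Type*} [Mul R] [Star R] (a : R) : Prop :=
  Commute a (star a * a)

section StarSemigroup

variable {R : Type*} [Semigroup R] [StarMul R]

theorem SemiconjBy.commute_star_mul_self_left {a b c : R} (h : SemiconjBy a b c)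
    (h' : SemiconjBy a (star b) (star c)) : Commute (star a * a) b := by
  have hstar : SemiconjBy (star a) c b := by simpa using h'.star_star_star
  exact hstar.mul_left h

theorem IsStarNormal.commute_star_mul_self {b : R} (hb : IsStarNormal b) :
    Commute b (star b * b) :=
  hb.star_comm_self.symm.mul_right (Commute.refl b)

theorem IsQuasinormal.mul {a b : R} (ha : IsQuasinormal a) (hb : IsStarNormal b)
    (hab : Commute (star a * a) b) (hba : Commute a (star b * b)) : IsQuasinormal (a * b) := by
  have hstar : star (a * b) * (a * b) = star b * b * (star a * a) := by
    rw [star_mul, mul_assoc, ← mul_assoc (star a), hab.eq, ← mul_assoc]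
  rw [IsQuasinormal, hstar]
  exact (hba.mul_left hb.commute_star_mul_self).mul_right (ha.mul_left hab.symm)

end StarSemigroup

theorem IsQuasinormal.mul_of_semiconjBy {A : Type*} [NonUnitalCStarAlgebra A] {a b c : A}
    (ha : IsQuasinormal a) (hb : IsStarNormal b) (hc : IsStarNormal c) (h : SemiconjBy a b c)
    (hbc : star c * c = star b * b) : IsQuasinormal (a * b) := by
  have h' : SemiconjBy a (star b) (star c) := h.star_right hb hc
  have hba : Commute a (star b * b) := hbc ▸ h'.mul_right h
  exact ha.mul hb (h.commute_star_mul_self_left h') hba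

theorem lambda_commute_quasinormal_mul_general
    {H : Type*} [NormedAddCommGroup H] [InnerProductSpace ℂ H] [CompleteSpace H]
    (A B : H →L[ℂ] H) (lam : ℂ)
    (hA : A * (ContinuousLinearMap.adjoint A * A) = (ContinuousLinearMap.adjoint A * A) * A)
    (hB : ContinuousLinearMap.adjoint B * B = B * ContinuousLinearMap.adjoint B)
    (hcomm : A * B = lam • (B * A)) (hlam : ‖lam‖ = 1) :
    (A * B) * (ContinuousLinearMap.adjoint (A * B) * (A * B)) =
      (ContinuousLinearMap.adjoint (A * B) * (A * B)) * (A * B) := by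
  simp only [← ContinuousLinearMap.star_eq_adjoint] at hA hB ⊢
  have hBnormal : IsStarNormal B := ⟨hB⟩
  have hsemi : SemiconjBy A B (lam • B) := by rw [SemiconjBy, hcomm, smul_mul_assoc]
  have hlamB : star (lam • B) * (lam • B) = star B * B := by
    rw [star_smul, smul_mul_smul_comm, ← starRingEnd_apply, Complex.conj_mul', hlam]
    simp
  exact IsQuasinormal.mul_of_semiconjBy hA hBnormal (.smul lam B) hsemi hlamB

theorem lambda_commute_quasinormal_mul
    {H : Type*} [NormedAddCommGroup H] [InnerProductSpace ℂ H] [CompleteSpace H]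
    (A B : H →L[ℂ] H) (lam : ℂ)
    (hA : A * (ContinuousLinearMap.adjoint A * A) = (ContinuousLinearMap.adjoint A * A) * A)
    (hB : ContinuousLinearMap.adjoint B * B = B * ContinuousLinearMap.adjoint B)
    (hcomm : A * B = lam • (B * A)) (hne : A * B ≠ 0) (hlam : ‖lam‖ = 1) :
    (A * B) * (ContinuousLinearMap.adjoint (A * B) * (A * B)) =
      (ContinuousLinearMap.adjoint (A * B) * (A * B)) * (A * B) :=
  lambda_commute_quasinormal_mul_general A B lam hA hB hcomm hlam
end

section
/- Let A be k-hyponormal (‖Ax‖^k ≤ ‖A^k x‖·‖x‖^{k−1} for all x, k ≥ 2 an integer) and B an isometry, with AB = λBA ≠ 0 and |λ| = 1. Then AB is k-hyponormal. -/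
theorem lambda_commute_k_hyponormal
    {H : Type*} [NormedAddCommGroup H] [InnerProductSpace ℂ H] [CompleteSpace H]
    (A B : H →L[ℂ] H) (lam : ℂ) (k : ℕ) (hk : 2 ≤ k)
    (hA : ∀ x : H, ‖A x‖ ^ k ≤ ‖(A ^ k) x‖ * ‖x‖ ^ (k - 1))
    (hB : ∀ x : H, ‖B x‖ = ‖x‖)
    (hcomm : A * B = lam • (B * A)) (hne : A * B ≠ 0) (hlam : ‖lam‖ = 1) :
    ∀ x : H, ‖(A * B) x‖ ^ k ≤ ‖((A * B) ^ k) x‖ * ‖x‖ ^ (k - 1) := by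
  -- A^n * B = lam^n • (B * A^n)
  have h1 : ∀ n : ℕ, A ^ n * B = (lam ^ n) • (B * A ^ n) := by
    intro n
    induction n with
    | zero => simp
    | succ n ih =>
      calc A ^ (n + 1) * B = A * (A ^ n * B) := by rw [pow_succ', mul_assoc]
        _ = A * ((lam ^ n) • (B * A ^ n)) := by rw [ih]
        _ = (lam ^ n) • (A * B * A ^ n) := by rw [mul_smul_comm]; simp only [mul_assoc]
        _ = (lam ^ n) • ((lam • (B * A)) * A ^ n) := by rw [hcomm]
        _ = (lam ^ (n + 1)) • (B * A ^ (n + 1)) := by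
            rw [smul_mul_assoc, smul_smul, pow_succ', pow_succ', mul_assoc]
            congr 1
            ring
  -- A^n * B^m = lam^(n*m) • (B^m * A^n)
  have h2 : ∀ n m : ℕ, A ^ n * B ^ m = (lam ^ (n * m)) • (B ^ m * A ^ n) := by
    intro n m
    induction m with
    | zero => simp
    | succ m ih =>
      calc A ^ n * B ^ (m + 1) = (A ^ n * B ^ m) * B := by rw [pow_succ, ← mul_assoc]
        _ = (lam ^ (n * m)) • (B ^ m * (A ^ n * B)) := by rw [ih, smul_mul_assoc]; simp only [mul_assoc]
        _ = (lam ^ (n * m)) • (B ^ m * ((lam ^ n) • (B * A ^ n))) := by rw [h1]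
        _ = (lam ^ (n * (m + 1))) • (B ^ (m + 1) * A ^ n) := by
            rw [mul_smul_comm, smul_smul, ← pow_add, pow_succ, ← mul_assoc]
            congr 1
  have hlamne : lam ≠ 0 := by
    intro h; rw [h] at hlam; simp at hlam
  -- (A*B)^n = c • (A^n * B^n) with ‖c‖ = 1
  have h3 : ∀ n : ℕ, ∃ c : ℂ, ‖c‖ = 1 ∧ (A * B) ^ n = c • (A ^ n * B ^ n) := by
    intro n
    induction n with
    | zero => exact ⟨1, by simp, by simp⟩
    | succ n ih =>
      obtain ⟨c, hc, hAB⟩ := ih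
      refine ⟨c * (lam ^ n)⁻¹, ?_, ?_⟩
      · rw [norm_mul, hc, norm_inv, norm_pow, hlam]; simp
      · have hswap : B ^ n * A = (lam ^ n)⁻¹ • (A * B ^ n) := by
          have := h2 1 n
          simp only [pow_one, one_mul] at this
          rw [this, smul_smul, inv_mul_cancel₀ (pow_ne_zero _ hlamne), one_smul]
        calc (A * B) ^ (n + 1) = (A * B) ^ n * (A * B) := by rw [pow_succ]
          _ = c • (A ^ n * (B ^ n * A) * B) := by rw [hAB, smul_mul_assoc]; simp only [mul_assoc]
          _ = c • (A ^ n * ((lam ^ n)⁻¹ • (A * B ^ n)) * B) := by rw [hswap]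
          _ = (c * (lam ^ n)⁻¹) • (A ^ (n + 1) * B ^ (n + 1)) := by
              rw [mul_smul_comm, smul_mul_assoc, smul_smul, pow_succ, pow_succ]
              simp only [mul_assoc]
  -- B^n is an isometry
  have hBn : ∀ (n : ℕ) (x : H), ‖(B ^ n) x‖ = ‖x‖ := by
    intro n
    induction n with
    | zero => simp
    | succ n ih =>
      intro x
      rw [pow_succ]
      calc ‖(B ^ n * B) x‖ = ‖(B ^ n) (B x)‖ := rfl
        _ = ‖B x‖ := ih (B x)
        _ = ‖x‖ := hB x
  intro x
  -- key: ‖A^k (B x)‖ = ‖A^k x‖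
  have key1 : ‖(A ^ k) (B x)‖ = ‖(A ^ k) x‖ := by
    have : (A ^ k) (B x) = ((A ^ k * B) x) := rfl
    rw [this, h1 k]
    simp only [ContinuousLinearMap.smul_apply, norm_smul, norm_pow, hlam, one_pow, one_mul]
    calc ‖(B * A ^ k) x‖ = ‖B ((A ^ k) x)‖ := rfl
      _ = ‖(A ^ k) x‖ := hB _
  -- key: ‖(AB)^k x‖ = ‖A^k x‖
  have key2 : ‖((A * B) ^ k) x‖ = ‖(A ^ k) x‖ := by
    obtain ⟨c, hc, hAB⟩ := h3 k
    rw [hAB]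
    simp only [ContinuousLinearMap.smul_apply, norm_smul, hc, one_mul]
    rw [h2 k k]
    simp only [ContinuousLinearMap.smul_apply, norm_smul, norm_pow, hlam, one_pow, one_mul]
    calc ‖(B ^ k * A ^ k) x‖ = ‖(B ^ k) ((A ^ k) x)‖ := rfl
      _ = ‖(A ^ k) x‖ := hBn k _
  calc ‖(A * B) x‖ ^ k = ‖A (B x)‖ ^ k := rfl
    _ ≤ ‖(A ^ k) (B x)‖ * ‖B x‖ ^ (k - 1) := hA (B x)
    _ = ‖((A * B) ^ k) x‖ * ‖x‖ ^ (k - 1) := by rw [key1, ← key2, hB x]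
end

section
/- Let A, B be bounded operators with AB = λBA ≠ 0, λ ∈ ℂ. If A* is M₁-hyponormal (‖Ax‖ ≤ M₁‖A*x‖ for all x) and B is M₂-hyponormal (‖B*x‖ ≤ M₂‖Bx‖ for all x), then |λ| ≤ (M₁M₂)^{1/2}. -/
theorem lambda_commute_M_hyponormal_upper
    {H : Type*} [NormedAddCommGroup H] [InnerProductSpace ℂ H] [CompleteSpace H]
    (A B : H →L[ℂ] H) (lam : ℂ) (M₁ M₂ : ℝ) (hM₁ : 1 ≤ M₁) (hM₂ : 1 ≤ M₂)
    (hcomm : A * B = lam • (B * A)) (hne : A * B ≠ 0)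
    (hA : ∀ x : H, ‖A x‖ ^ 2 ≤ M₁ * ‖(ContinuousLinearMap.adjoint A) x‖ ^ 2)
    (hB : ∀ x : H, ‖(ContinuousLinearMap.adjoint B) x‖ ^ 2 ≤ M₂ * ‖B x‖ ^ 2) :
    ‖lam‖ ≤ Real.sqrt (M₁ * M₂) := by
  have hM₁0 : (0:ℝ) ≤ M₁ := le_trans zero_le_one hM₁
  have hM₂0 : (0:ℝ) ≤ M₂ := le_trans zero_le_one hM₂
  set A' := ContinuousLinearMap.adjoint A with hA'
  set B' := ContinuousLinearMap.adjoint B with hB'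
  -- pointwise: ‖A x‖ ≤ √M₁ ‖A' x‖ and ‖B' x‖ ≤ √M₂ ‖B x‖
  have hA1 : ∀ x : H, ‖A x‖ ≤ Real.sqrt M₁ * ‖A' x‖ := by
    intro x
    have h := hA x
    have := Real.sqrt_le_sqrt h
    rwa [Real.sqrt_sq (norm_nonneg _), Real.sqrt_mul hM₁0,
      Real.sqrt_sq (norm_nonneg _)] at this
  have hB1 : ∀ x : H, ‖B' x‖ ≤ Real.sqrt M₂ * ‖B x‖ := by
    intro x
    have h := hB x
    have := Real.sqrt_le_sqrt h
    rwa [Real.sqrt_sq (norm_nonneg _), Real.sqrt_mul hM₂0,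
      Real.sqrt_sq (norm_nonneg _)] at this
  -- ‖A * B‖ ≤ √M₁ ‖A' * B‖
  have h1 : ‖A * B‖ ≤ Real.sqrt M₁ * ‖A' * B‖ := by
    apply ContinuousLinearMap.opNorm_le_bound _
      (mul_nonneg (Real.sqrt_nonneg _) (norm_nonneg _))
    intro x
    calc ‖(A * B) x‖ = ‖A (B x)‖ := rfl
      _ ≤ Real.sqrt M₁ * ‖A' (B x)‖ := hA1 (B x)
      _ = Real.sqrt M₁ * ‖(A' * B) x‖ := rfl
      _ ≤ Real.sqrt M₁ * (‖A' * B‖ * ‖x‖) := by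
          exact mul_le_mul_of_nonneg_left ((A' * B).le_opNorm x) (Real.sqrt_nonneg _)
      _ = Real.sqrt M₁ * ‖A' * B‖ * ‖x‖ := by ring
  -- ‖A' * B‖ = ‖B' * A‖
  have h2 : ‖A' * B‖ = ‖B' * A‖ := by
    have : ContinuousLinearMap.adjoint (A' * B) = B' * A := by
      rw [show A' * B = A'.comp B from rfl, ContinuousLinearMap.adjoint_comp,
        hA', ContinuousLinearMap.adjoint_adjoint]
      rfl
    calc ‖A' * B‖ = ‖ContinuousLinearMap.adjoint (A' * B)‖ :=
          (LinearIsometryEquiv.norm_map ContinuousLinearMap.adjoint _).symm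
      _ = ‖B' * A‖ := by rw [this]
  -- ‖B' * A‖ ≤ √M₂ ‖B * A‖
  have h3 : ‖B' * A‖ ≤ Real.sqrt M₂ * ‖B * A‖ := by
    apply ContinuousLinearMap.opNorm_le_bound _
      (mul_nonneg (Real.sqrt_nonneg _) (norm_nonneg _))
    intro x
    calc ‖(B' * A) x‖ = ‖B' (A x)‖ := rfl
      _ ≤ Real.sqrt M₂ * ‖B (A x)‖ := hB1 (A x)
      _ = Real.sqrt M₂ * ‖(B * A) x‖ := rfl
      _ ≤ Real.sqrt M₂ * (‖B * A‖ * ‖x‖) := by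
          exact mul_le_mul_of_nonneg_left ((B * A).le_opNorm x) (Real.sqrt_nonneg _)
      _ = Real.sqrt M₂ * ‖B * A‖ * ‖x‖ := by ring
  -- B * A ≠ 0
  have hBA : (0:ℝ) < ‖B * A‖ := by
    rcases eq_or_ne (B * A) 0 with h | h
    · exfalso; apply hne; rw [hcomm, h, smul_zero]
    · exact norm_pos_iff.mpr h
  have hnorm : ‖A * B‖ = ‖lam‖ * ‖B * A‖ := by rw [hcomm, norm_smul]
  have key : ‖lam‖ * ‖B * A‖ ≤ Real.sqrt M₁ * Real.sqrt M₂ * ‖B * A‖ := by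
    calc ‖lam‖ * ‖B * A‖ = ‖A * B‖ := hnorm.symm
      _ ≤ Real.sqrt M₁ * ‖A' * B‖ := h1
      _ = Real.sqrt M₁ * ‖B' * A‖ := by rw [h2]
      _ ≤ Real.sqrt M₁ * (Real.sqrt M₂ * ‖B * A‖) :=
          mul_le_mul_of_nonneg_left h3 (Real.sqrt_nonneg _)
      _ = Real.sqrt M₁ * Real.sqrt M₂ * ‖B * A‖ := by ring
  have : ‖lam‖ ≤ Real.sqrt M₁ * Real.sqrt M₂ := le_of_mul_le_mul_right key hBA
  rwa [← Real.sqrt_mul hM₁0] at this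
end

section
/- Let A, B be bounded operators with AB = λBA ≠ 0, λ ∈ ℂ. If A is M₁-hyponormal (AA* ≤ M₁A*A) and B* is M₂-hyponormal (B*B ≤ M₂BB*), then |λ| ≥ (M₁M₂)^{−1/2}. -/
theorem lambda_commute_M_hyponormal_lower
    {H : Type*} [NormedAddCommGroup H] [InnerProductSpace ℂ H] [CompleteSpace H]
    (A B : H →L[ℂ] H) (lam : ℂ) (M₁ M₂ : ℝ) (hM₁ : 1 ≤ M₁) (hM₂ : 1 ≤ M₂)
    (hcomm : A * B = lam • (B * A)) (hne : A * B ≠ 0)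
    (hA : ∀ x : H, ‖(ContinuousLinearMap.adjoint A) x‖ ^ 2 ≤ M₁ * ‖A x‖ ^ 2)
    (hB : ∀ x : H, ‖B x‖ ^ 2 ≤ M₂ * ‖(ContinuousLinearMap.adjoint B) x‖ ^ 2) :
    (Real.sqrt (M₁ * M₂))⁻¹ ≤ ‖lam‖ := by
  have hM₁0 : (0:ℝ) ≤ M₁ := le_trans zero_le_one hM₁
  have hM₂0 : (0:ℝ) ≤ M₂ := le_trans zero_le_one hM₂
  set s₁ := Real.sqrt M₁ with hs₁
  set s₂ := Real.sqrt M₂ with hs₂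
  have hs₁0 : 0 ≤ s₁ := Real.sqrt_nonneg _
  have hs₂0 : 0 ≤ s₂ := Real.sqrt_nonneg _
  -- pointwise square-root versions of the hypotheses
  have hA' : ∀ x : H, ‖(ContinuousLinearMap.adjoint A) x‖ ≤ s₁ * ‖A x‖ := by
    intro x
    calc ‖(ContinuousLinearMap.adjoint A) x‖
        = Real.sqrt (‖(ContinuousLinearMap.adjoint A) x‖ ^ 2) :=
          (Real.sqrt_sq (norm_nonneg _)).symm
      _ ≤ Real.sqrt (M₁ * ‖A x‖ ^ 2) := Real.sqrt_le_sqrt (hA x)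
      _ = s₁ * ‖A x‖ := by
          rw [Real.sqrt_mul hM₁0, Real.sqrt_sq (norm_nonneg _)]
  have hB' : ∀ x : H, ‖B x‖ ≤ s₂ * ‖(ContinuousLinearMap.adjoint B) x‖ := by
    intro x
    calc ‖B x‖ = Real.sqrt (‖B x‖ ^ 2) := (Real.sqrt_sq (norm_nonneg _)).symm
      _ ≤ Real.sqrt (M₂ * ‖(ContinuousLinearMap.adjoint B) x‖ ^ 2) :=
          Real.sqrt_le_sqrt (hB x)
      _ = s₂ * ‖(ContinuousLinearMap.adjoint B) x‖ := by
          rw [Real.sqrt_mul hM₂0, Real.sqrt_sq (norm_nonneg _)]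
  -- ‖A* ∘ B‖ ≤ s₁ ‖A ∘ B‖
  have h1 : ‖(ContinuousLinearMap.adjoint A) * B‖ ≤ s₁ * ‖A * B‖ := by
    apply ContinuousLinearMap.opNorm_le_bound _
      (mul_nonneg hs₁0 (norm_nonneg _))
    intro x
    calc ‖((ContinuousLinearMap.adjoint A) * B) x‖
        = ‖(ContinuousLinearMap.adjoint A) (B x)‖ := rfl
      _ ≤ s₁ * ‖A (B x)‖ := hA' _
      _ = s₁ * ‖(A * B) x‖ := rfl
      _ ≤ s₁ * (‖A * B‖ * ‖x‖) := by
          have := (A * B).le_opNorm x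
          exact mul_le_mul_of_nonneg_left this hs₁0
      _ = s₁ * ‖A * B‖ * ‖x‖ := by ring
  -- ‖B* ∘ A‖ = ‖A* ∘ B‖
  have h2 : ‖(ContinuousLinearMap.adjoint B) * A‖
      = ‖(ContinuousLinearMap.adjoint A) * B‖ := by
    rw [← ContinuousLinearMap.star_eq_adjoint, ← ContinuousLinearMap.star_eq_adjoint]
    calc ‖star B * A‖ = ‖star (star B * A)‖ := (norm_star _).symm
      _ = ‖star A * star (star B)‖ := by rw [star_mul]
      _ = ‖star A * B‖ := by rw [star_star]
  -- ‖B ∘ A‖ ≤ s₂ ‖B* ∘ A‖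
  have h3 : ‖B * A‖ ≤ s₂ * ‖(ContinuousLinearMap.adjoint B) * A‖ := by
    apply ContinuousLinearMap.opNorm_le_bound _
      (mul_nonneg hs₂0 (norm_nonneg _))
    intro x
    calc ‖(B * A) x‖ = ‖B (A x)‖ := rfl
      _ ≤ s₂ * ‖(ContinuousLinearMap.adjoint B) (A x)‖ := hB' _
      _ = s₂ * ‖((ContinuousLinearMap.adjoint B) * A) x‖ := rfl
      _ ≤ s₂ * (‖(ContinuousLinearMap.adjoint B) * A‖ * ‖x‖) := by
          have := ((ContinuousLinearMap.adjoint B) * A).le_opNorm x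
          exact mul_le_mul_of_nonneg_left this hs₂0
      _ = s₂ * ‖(ContinuousLinearMap.adjoint B) * A‖ * ‖x‖ := by ring
  have hAB : ‖A * B‖ = ‖lam‖ * ‖B * A‖ := by
    rw [hcomm, norm_smul]
  have hpos : 0 < ‖A * B‖ := norm_pos_iff.mpr hne
  have key : ‖A * B‖ ≤ ‖lam‖ * (s₂ * (s₁ * ‖A * B‖)) := by
    calc ‖A * B‖ = ‖lam‖ * ‖B * A‖ := hAB
      _ ≤ ‖lam‖ * (s₂ * ‖(ContinuousLinearMap.adjoint B) * A‖) :=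
          mul_le_mul_of_nonneg_left h3 (norm_nonneg _)
      _ = ‖lam‖ * (s₂ * ‖(ContinuousLinearMap.adjoint A) * B‖) := by rw [h2]
      _ ≤ ‖lam‖ * (s₂ * (s₁ * ‖A * B‖)) := by
          apply mul_le_mul_of_nonneg_left _ (norm_nonneg _)
          exact mul_le_mul_of_nonneg_left h1 hs₂0
  have hone : 1 ≤ ‖lam‖ * (s₁ * s₂) := by nlinarith
  have hsprod : Real.sqrt (M₁ * M₂) = s₁ * s₂ := Real.sqrt_mul hM₁0 M₂
  rw [hsprod]
  have hs12pos : 0 < s₁ * s₂ := by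
    have h1' : (1:ℝ) ≤ s₁ := by
      rw [hs₁]; exact Real.one_le_sqrt.mpr hM₁
    have h2' : (1:ℝ) ≤ s₂ := by
      rw [hs₂]; exact Real.one_le_sqrt.mpr hM₂
    nlinarith
  rw [inv_le_iff_one_le_mul₀ hs12pos] at *
  nlinarith
end

section
/- Let A, B be bounded operators with AB = λBA ≠ 0, λ ∈ ℂ. If A* and B are hyponormal, then |λ| ≤ 1. -/
open ContinuousLinearMap

theorem lambda_commute_hyponormal_upper
    {H : Type*} [NormedAddCommGroup H] [InnerProductSpace ℂ H] [CompleteSpace H]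
    (A B : H →L[ℂ] H) (lam : ℂ)
    (hcomm : A * B = lam • (B * A)) (hne : A * B ≠ 0)
    (hA : ∀ x : H, ‖A x‖ ≤ ‖(ContinuousLinearMap.adjoint A) x‖)
    (hB : ∀ x : H, ‖(ContinuousLinearMap.adjoint B) x‖ ≤ ‖B x‖) :
    ‖lam‖ ≤ 1 := by
  set A' := ContinuousLinearMap.adjoint A with hA'
  set B' := ContinuousLinearMap.adjoint B with hB'
  have hadjnorm : ∀ T : H →L[ℂ] H, ‖ContinuousLinearMap.adjoint T‖ = ‖T‖ := fun T =>
    (ContinuousLinearMap.adjoint : (H →L[ℂ] H) ≃ₗᵢ⋆[ℂ] (H →L[ℂ] H)).norm_map T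
  -- step 1 : ‖B' ∘L A'‖ ≤ ‖B ∘L A'‖
  have h1 : ‖B' ∘L A'‖ ≤ ‖B ∘L A'‖ := by
    apply ContinuousLinearMap.opNorm_le_bound _ (norm_nonneg _)
    intro x
    calc ‖(B' ∘L A') x‖ = ‖B' (A' x)‖ := rfl
      _ ≤ ‖B (A' x)‖ := hB _
      _ = ‖(B ∘L A') x‖ := rfl
      _ ≤ ‖B ∘L A'‖ * ‖x‖ := ContinuousLinearMap.le_opNorm _ _
  -- step 2 : ‖A ∘L B'‖ ≤ ‖A' ∘L B'‖
  have h2 : ‖A ∘L B'‖ ≤ ‖A' ∘L B'‖ := by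
    apply ContinuousLinearMap.opNorm_le_bound _ (norm_nonneg _)
    intro x
    calc ‖(A ∘L B') x‖ = ‖A (B' x)‖ := rfl
      _ ≤ ‖A' (B' x)‖ := hA _
      _ = ‖(A' ∘L B') x‖ := rfl
      _ ≤ ‖A' ∘L B'‖ * ‖x‖ := ContinuousLinearMap.le_opNorm _ _
  have key : ‖A * B‖ ≤ ‖B * A‖ := by
    calc ‖A * B‖ = ‖ContinuousLinearMap.adjoint (A ∘L B)‖ := (hadjnorm _).symm
      _ = ‖B' ∘L A'‖ := by rw [ContinuousLinearMap.adjoint_comp]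
      _ ≤ ‖B ∘L A'‖ := h1
      _ = ‖ContinuousLinearMap.adjoint (B ∘L A')‖ := (hadjnorm _).symm
      _ = ‖A ∘L B'‖ := by
          rw [ContinuousLinearMap.adjoint_comp, hA', ContinuousLinearMap.adjoint_adjoint]
      _ ≤ ‖A' ∘L B'‖ := h2
      _ = ‖ContinuousLinearMap.adjoint (A' ∘L B')‖ := (hadjnorm _).symm
      _ = ‖B * A‖ := by
          rw [ContinuousLinearMap.adjoint_comp, hA', hB',
            ContinuousLinearMap.adjoint_adjoint, ContinuousLinearMap.adjoint_adjoint]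
          rfl
  have hBA : B * A ≠ 0 := by
    intro h
    apply hne
    rw [hcomm, h, smul_zero]
  have hBApos : (0 : ℝ) < ‖B * A‖ := norm_pos_iff.mpr hBA
  have : ‖lam‖ * ‖B * A‖ ≤ ‖B * A‖ := by
    calc ‖lam‖ * ‖B * A‖ = ‖lam • (B * A)‖ := (norm_smul _ _).symm
      _ = ‖A * B‖ := by rw [hcomm]
      _ ≤ ‖B * A‖ := key
  nlinarith
end

section
/- Let A, B be bounded operators with AB = λBA ≠ 0, λ ∈ ℂ. If A and B* are hyponormal, then |λ| ≥ 1. -/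
theorem lambda_commute_hyponormal_lower
    {H : Type*} [NormedAddCommGroup H] [InnerProductSpace ℂ H] [CompleteSpace H]
    (A B : H →L[ℂ] H) (lam : ℂ)
    (hcomm : A * B = lam • (B * A)) (hne : A * B ≠ 0)
    (hA : ∀ x : H, ‖(ContinuousLinearMap.adjoint A) x‖ ≤ ‖A x‖)
    (hB : ∀ x : H, ‖B x‖ ≤ ‖(ContinuousLinearMap.adjoint B) x‖) :
    1 ≤ ‖lam‖ := by
  have hBA : B * A ≠ 0 := by
    intro h
    exact hne (by rw [hcomm, h, smul_zero])
  have hBApos : 0 < ‖B * A‖ := norm_pos_iff.mpr hBA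
  -- ‖B*A‖ ≤ ‖B† * A‖
  have h1 : ‖B * A‖ ≤ ‖ContinuousLinearMap.adjoint B * A‖ := by
    apply ContinuousLinearMap.opNorm_le_bound _ (norm_nonneg _)
    intro x
    calc ‖(B * A) x‖ = ‖B (A x)‖ := rfl
      _ ≤ ‖ContinuousLinearMap.adjoint B (A x)‖ := hB (A x)
      _ = ‖(ContinuousLinearMap.adjoint B * A) x‖ := rfl
      _ ≤ ‖ContinuousLinearMap.adjoint B * A‖ * ‖x‖ :=
        ContinuousLinearMap.le_opNorm _ x
  -- ‖B† * A‖ = ‖A† * B‖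
  have h2 : ‖ContinuousLinearMap.adjoint B * A‖ = ‖ContinuousLinearMap.adjoint A * B‖ := by
    have : ContinuousLinearMap.adjoint (ContinuousLinearMap.adjoint B * A)
        = ContinuousLinearMap.adjoint A * B := by
      rw [show ContinuousLinearMap.adjoint B * A = ContinuousLinearMap.adjoint B ∘L A from rfl,
        ContinuousLinearMap.adjoint_comp, ContinuousLinearMap.adjoint_adjoint]
      rfl
    rw [← this, LinearIsometryEquiv.norm_map]
  -- ‖A† * B‖ ≤ ‖A * B‖
  have h3 : ‖ContinuousLinearMap.adjoint A * B‖ ≤ ‖A * B‖ := by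
    apply ContinuousLinearMap.opNorm_le_bound _ (norm_nonneg _)
    intro x
    calc ‖(ContinuousLinearMap.adjoint A * B) x‖ = ‖ContinuousLinearMap.adjoint A (B x)‖ := rfl
      _ ≤ ‖A (B x)‖ := hA (B x)
      _ = ‖(A * B) x‖ := rfl
      _ ≤ ‖A * B‖ * ‖x‖ := ContinuousLinearMap.le_opNorm _ x
  have h4 : ‖A * B‖ = ‖lam‖ * ‖B * A‖ := by rw [hcomm, norm_smul]
  have : ‖B * A‖ ≤ ‖lam‖ * ‖B * A‖ := by
    calc ‖B * A‖ ≤ ‖ContinuousLinearMap.adjoint B * A‖ := h1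
      _ = ‖ContinuousLinearMap.adjoint A * B‖ := h2
      _ ≤ ‖A * B‖ := h3
      _ = ‖lam‖ * ‖B * A‖ := h4
    
  exact le_of_mul_le_mul_right (by linarith) hBApos
end

section
/- Let A, B be bounded operators on a complex Hilbert space with B normal and AB = λBA for a nonzero λ ∈ ℂ. Then BA* = λA*B and AB* = λ̄B*A. -/
section LambdaCommute

variable {A : Type*} [NonUnitalCStarAlgebra A] {x b : A} {c : ℂ}

lemma IsStarNormal.mul_star_eq_star_smul_star_mul (hb : IsStarNormal b)
    (h : x * b = c • (b * x)) :
    x * star b = star c • (star b * x) := by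
  have hsemi : SemiconjBy x b (c • b) := by rw [SemiconjBy, h, smul_mul_assoc]
  have := hsemi.star_right hb (hb.smul c)
  rwa [SemiconjBy, star_smul, smul_mul_assoc] at this

lemma IsStarNormal.self_mul_star_eq_smul_star_mul (hb : IsStarNormal b)
    (h : x * b = c • (b * x)) :
    b * star x = c • (star x * b) := by
  simpa only [star_mul, star_star, star_smul] using
    congr(star $(hb.mul_star_eq_star_smul_star_mul h))

end LambdaCommute

theorem lambda_commute_fuglede_putnam_general
    {H : Type*} [NormedAddCommGroup H] [InnerProductSpace ℂ H] [CompleteSpace H]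
    (A B : H →L[ℂ] H) (lam : ℂ)
    (hB : ContinuousLinearMap.adjoint B * B = B * ContinuousLinearMap.adjoint B)
    (hcomm : A * B = lam • (B * A)) :
    B * ContinuousLinearMap.adjoint A = lam • (ContinuousLinearMap.adjoint A * B) ∧
      A * ContinuousLinearMap.adjoint B =
        (starRingEnd ℂ lam) • (ContinuousLinearMap.adjoint B * A) := by
  simp only [← ContinuousLinearMap.star_eq_adjoint] at hB ⊢
  have hnormal : IsStarNormal B := ⟨hB⟩
  exact ⟨hnormal.self_mul_star_eq_smul_star_mul hcomm,
    hnormal.mul_star_eq_star_smul_star_mul hcomm⟩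

theorem lambda_commute_fuglede_putnam
    {H : Type*} [NormedAddCommGroup H] [InnerProductSpace ℂ H] [CompleteSpace H]
    (A B : H →L[ℂ] H) (lam : ℂ) (hlam : lam ≠ 0)
    (hB : ContinuousLinearMap.adjoint B * B = B * ContinuousLinearMap.adjoint B)
    (hcomm : A * B = lam • (B * A)) :
    B * ContinuousLinearMap.adjoint A = lam • (ContinuousLinearMap.adjoint A * B) ∧
      A * ContinuousLinearMap.adjoint B =
        (starRingEnd ℂ lam) • (ContinuousLinearMap.adjoint B * A) :=
  lambda_commute_fuglede_putnam_general A B lam hB hcomm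
end
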